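/- Let S = (x₁,y₁),…,(xₙ,yₙ) be labeled examples from a domain X with yᵢ ∈ {−1,+1}, let κ ∈ (0,1), γ ∈ (0,1), and set λ = γ/4. Let Γ be the set of bounded measures on [n] of density at least κ and μ₁(i) = κ for all i. Suppose h₁,…,h_T : X → [−1,1] is a sequence of hypotheses such that, defining losses ℓ_j(i) = 1 − (1/2)|h_j(xᵢ) − yᵢ| and measures μ_t = Π_Γ( i ↦ e^{−λ·Σ_{j<t} ℓ_j(i)}·μ₁(i) ), each h_t has advantage γ under the induced distribution μ̂_t, i.e., (1/2)·Σᵢ μ̂_t(i)|h_t(xᵢ) − yᵢ| ≤ 1/2 − γ. If T ≥ 16·log(1/κ)/γ², then the aggregated hypothesis H(x) = (1/T)·Σ_{t=1}^T h_t(x) satisfies: (i) good margin — the number of indices i with yᵢ·H(xᵢ) ≤ γ is at most κn; and (ii) smoothness — every distribution μ̂_t satisfies μ̂_t(i) ≤ 1/(κn) for all i. -/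

import Mathlib

/-- KL divergence between bounded measures on `Fin n`. -/
noncomputable def KLdiv {n : ℕ} (μ₁ μ₂ : Fin n → ℝ) : ℝ :=
  ∑ i, (μ₁ i * Real.log (μ₁ i / μ₂ i) + μ₂ i - μ₁ i)

/-- A bounded measure on `[n]` is a function into `[0,1]`. -/
def IsBddMeasure {n : ℕ} (μ : Fin n → ℝ) : Prop := ∀ i, μ i ∈ Set.Icc (0:ℝ) 1

/-- `ν` is the Bregman projection of `μ̃` onto the set `Γ` of κ-dense bounded
measures: it lies in `Γ` and minimizes `KL(·‖μ̃)` there. -/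
def IsBregmanProj {n : ℕ} (κ : ℝ) (μt ν : Fin n → ℝ) : Prop :=
  (IsBddMeasure ν ∧ κ * n ≤ ∑ i, ν i) ∧
    ∀ ρ : Fin n → ℝ, IsBddMeasure ρ → κ * n ≤ ∑ i, ρ i → KLdiv ν μt ≤ KLdiv ρ μt

/-! The lazy booster is follow-the-regularized-leader with regularizer `KL(·‖κ)` on the set `Γ`
of `κ`-dense measures: with `L_t` the cumulative loss and `λ` (written `η` below) the learning rate,
the Bregman projection of `e^{-λ L_t} κ` minimizes `KL(ρ‖κ) + λ ⟨ρ, L_t⟩` over `Γ`. The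
be-the-leader lemma compares the leaders with any fixed `ν ∈ Γ`, and the generalized Pythagorean
inequality for Bregman projections shows that consecutive leaders are close: their symmetrized KL
divergence is at most `λ ⟨μ_t - μ_{t+1}, ℓ_t⟩`, which by the logarithmic-mean inequality and
Cauchy–Schwarz gives `⟨μ_t - μ_{t+1}, ℓ_t⟩ ≤ λ κ n`. Altogether
`λ Σ_t ⟨μ_t, ℓ_t⟩ ≤ KL(ν‖κ) + λ Σ_t ⟨ν, ℓ_t⟩ + λ² T κ n`.

If more than `κ n` examples had margin at most `γ`, the uniform measure `ν` of mass `κ n` on them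
would have `KL(ν‖κ) < κ n log (1/κ)` and cumulative loss at most `T (1 + γ) / 2` per unit of mass,
while the advantage of the weak learner forces the leaders' loss to be at least `T (1/2 + γ)` per
unit of mass; for `λ = γ/4` this contradicts `T ≥ 16 log (1/κ) / γ²`. Smoothness is immediate from
`μ_t ≤ 1` and `|μ_t| ≥ κ n`. -/

open Finset Real InformationTheory

noncomputable def klTerm (a b : ℝ) : ℝ := a * log (a / b) + b - a

lemma KLdiv_eq_sum_klTerm {n : ℕ} (μ ν : Fin n → ℝ) :
    KLdiv μ ν = ∑ i, klTerm (μ i) (ν i) := rfl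

lemma klTerm_eq_mul_klFun {a b : ℝ} (hb : 0 < b) :
    klTerm a b = b * klFun (a / b) := by
  rw [klTerm, klFun_apply]
  field_simp

lemma klTerm_nonneg {a b : ℝ} (ha : 0 ≤ a) (hb : 0 < b) : 0 ≤ klTerm a b := by
  rw [klTerm_eq_mul_klFun hb]
  exact mul_nonneg hb.le (klFun_nonneg (by positivity))

lemma klTerm_pos {a b : ℝ} (ha : 0 ≤ a) (hb : 0 < b) (hab : a ≠ b) : 0 < klTerm a b := by
  rw [klTerm_eq_mul_klFun hb]
  refine mul_pos hb ((klFun_nonneg (by positivity)).lt_of_ne' ?_)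
  rwa [Ne, klFun_eq_zero_iff (by positivity), div_eq_one_iff_eq hb.ne']

lemma klTerm_self {a : ℝ} (ha : a ≠ 0) : klTerm a a = 0 := by
  simp [klTerm, div_self ha]

lemma klTerm_three_point {a b c : ℝ} (ha : 0 ≤ a) (hb : 0 < b) (hc : 0 < c) :
    klTerm a b = klTerm c b + (a - c) * log (c / b) + klTerm a c := by
  rcases ha.eq_or_lt with rfl | ha
  · simp only [klTerm]
    ring
  · simp only [klTerm]
    rw [log_div ha.ne' hb.ne', log_div hc.ne' hb.ne', log_div ha.ne' hc.ne']
    ring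

lemma klTerm_lt_klTerm {a₁ a₂ b : ℝ} (hb : 0 < b) (hba : b ≤ a₁) (ha : a₁ < a₂) :
    klTerm a₁ b < klTerm a₂ b := by
  have ha₁ : 0 < a₁ := hb.trans_le hba
  have hlog : 0 ≤ log (a₁ / b) := log_nonneg ((one_le_div hb).mpr hba)
  rw [klTerm_three_point (ha₁.trans ha).le hb ha₁]
  nlinarith [klTerm_pos (ha₁.trans ha).le ha₁ ha.ne']

lemma klTerm_le_sq_div {a c : ℝ} (ha : 0 ≤ a) (hc : 0 < c) : klTerm a c ≤ (a - c) ^ 2 / c := by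
  rcases ha.eq_or_lt with rfl | ha
  · simp [klTerm, sq, hc.ne']
  · have h := mul_le_mul_of_nonneg_left (log_le_sub_one_of_pos (div_pos ha hc)) ha.le
    have : (a - c) ^ 2 / c = a * (a / c - 1) + c - a := by field_simp; ring
    rw [klTerm, this]
    linarith

lemma klTerm_exp_mul {a b : ℝ} (ha : 0 ≤ a) (hb : 0 < b) (x : ℝ) :
    klTerm a (exp (-x) * b) = klTerm a b + a * x + (exp (-x) * b - b) := by
  rcases ha.eq_or_lt with rfl | ha
  · simp [klTerm]
  · have : a / (exp (-x) * b) = a / b * exp x := by rw [exp_neg]; field_simp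
    rw [klTerm, klTerm, this, log_mul (by positivity) (exp_ne_zero x), log_exp]
    ring

lemma klTerm_add_klTerm (a b : ℝ) : klTerm a b + klTerm b a = (a - b) * log (a / b) := by
  rw [klTerm, klTerm, ← inv_div, log_inv]
  ring

lemma two_mul_sub_div_add_le_log_div {a c : ℝ} (hc : 0 < c) (hca : c ≤ a) :
    2 * (a - c) / (a + c) ≤ log (a / c) := by
  have hac : 0 < a + c := by linarith
  -- the first term of the series of `artanh ((a - c) / (a + c)) = log (a / c) / 2`
  have h := sum_range_le_log_div (x := (a - c) / (a + c)) (div_nonneg (by linarith) hac.le)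
    ((div_lt_one hac).mpr (by linarith)) 1
  have hx : (1 + (a - c) / (a + c)) / (1 - (a - c) / (a + c)) = a / c := by
    field_simp [hc.ne']
    ring
  simp only [range_one, sum_singleton, hx] at h
  norm_num at h
  rw [mul_div_assoc]
  linarith

lemma sq_div_le_sub_mul_log_div {a c : ℝ} (ha : 0 < a) (hc : 0 < c) :
    2 * (a - c) ^ 2 / (a + c) ≤ (a - c) * log (a / c) := by
  wlog hca : c ≤ a generalizing a c
  · calc 2 * (a - c) ^ 2 / (a + c) = 2 * (c - a) ^ 2 / (c + a) := by ring
      _ ≤ (c - a) * log (c / a) := this hc ha (le_of_not_ge hca)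
      _ = (a - c) * log (a / c) := by rw [← inv_div, log_inv]; ring
  have h := mul_le_mul_of_nonneg_left (two_mul_sub_div_add_le_log_div hc hca)
    (sub_nonneg.mpr hca)
  calc 2 * (a - c) ^ 2 / (a + c) = (a - c) * (2 * (a - c) / (a + c)) := by ring
    _ ≤ _ := h

lemma sum_sub_mul_le_of_sum_sub_mul_log_le {ι : Type*} [Fintype ι] {a b ℓ : ι → ℝ} {η : ℝ}
    (hη : 0 ≤ η) (ha : ∀ i, 0 < a i) (hb : ∀ i, 0 < b i) (hℓ : ∀ i, |ℓ i| ≤ 1)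
    (h : ∑ i, (a i - b i) * log (a i / b i) ≤ η * ∑ i, (a i - b i) * ℓ i) :
    ∑ i, (a i - b i) * ℓ i ≤ η * ((∑ i, a i + ∑ i, b i) / 2) := by
  set x := ∑ i, (a i - b i) * ℓ i
  have hmass : (∑ i, a i + ∑ i, b i) / 2 = ∑ i, (a i + b i) / 2 := by
    rw [← sum_div, sum_add_distrib]
  rw [hmass]
  have hg : ∀ i ∈ univ, 0 < (a i + b i) / 2 := fun i _ => by linarith [ha i, hb i]
  rcases le_or_gt x 0 with hx | hx
  · exact hx.trans (mul_nonneg hη (sum_nonneg fun i hi => (hg i hi).le))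
  have hG : 0 < ∑ i, (a i + b i) / 2 := by
    rcases isEmpty_or_nonempty ι with hι | hι
    · simp [x] at hx
    · exact sum_pos hg univ_nonempty
  -- Cauchy–Schwarz weighted by the arithmetic means, which dominate the logarithmic means
  have hcs : x ^ 2 / ∑ i, (a i + b i) / 2 ≤ η * x := by
    refine (sq_sum_div_le_sum_sq_div univ _ hg).trans (le_trans ?_ h)
    refine sum_le_sum fun i _ => ?_
    have hsq : ((a i - b i) * ℓ i) ^ 2 ≤ (a i - b i) ^ 2 := by
      rw [mul_pow]
      exact mul_le_of_le_one_right (sq_nonneg _) ((sq_le_one_iff_abs_le_one _).mpr (hℓ i))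
    calc ((a i - b i) * ℓ i) ^ 2 / ((a i + b i) / 2) ≤ (a i - b i) ^ 2 / ((a i + b i) / 2) :=
          div_le_div_of_nonneg_right hsq (hg i (mem_univ i)).le
      _ = 2 * (a i - b i) ^ 2 / (a i + b i) := by rw [div_div_eq_mul_div]; ring
      _ ≤ _ := sq_div_le_sub_mul_log_div (ha i) (hb i)
  rw [div_le_iff₀ hG] at hcs
  nlinarith

open Filter Topology in
lemma nonneg_of_forall_add_mul_nonneg {E C : ℝ} (h : ∀ s ∈ Set.Ioo (0 : ℝ) 1, 0 ≤ E + s * C) :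
    0 ≤ E := by
  have hcont : Continuous (fun s : ℝ => E + s * C) := by fun_prop
  have hlim : Tendsto (fun s : ℝ => E + s * C) (𝓝[>] 0) (𝓝 E) := by
    simpa using (hcont.tendsto 0).mono_left nhdsWithin_le_nhds
  exact ge_of_tendsto hlim (mem_of_superset (Ioo_mem_nhdsGT one_pos) h)

section BregmanProjection

variable {n : ℕ} {κ : ℝ} {b μ ρ : Fin n → ℝ}

def denseMeasures (n : ℕ) (κ : ℝ) : Set (Fin n → ℝ) :=
  {ρ | IsBddMeasure ρ ∧ κ * n ≤ ∑ i, ρ i}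

lemma isBregmanProj_iff :
    IsBregmanProj κ b μ ↔
      μ ∈ denseMeasures n κ ∧ IsMinOn (KLdiv · b) (denseMeasures n κ) μ :=
  ⟨fun h => ⟨h.1, fun ρ hρ => h.2 ρ hρ.1 hρ.2⟩, fun h => ⟨h.1, fun _ h₁ h₂ => h.2 ⟨h₁, h₂⟩⟩⟩

lemma convex_denseMeasures : Convex ℝ (denseMeasures n κ) := by
  rintro μ ⟨hμ, hμs⟩ ρ ⟨hρ, hρs⟩ s t hs ht hst
  refine ⟨fun i => ?_, ?_⟩
  · simp only [Pi.add_apply, Pi.smul_apply, smul_eq_mul]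
    obtain ⟨hμ0, hμ1⟩ := hμ i
    obtain ⟨hρ0, hρ1⟩ := hρ i
    constructor <;> nlinarith
  · simp only [Pi.add_apply, Pi.smul_apply, smul_eq_mul, sum_add_distrib, ← mul_sum]
    have hmass : s * (κ * n) + t * (κ * n) = κ * n := by rw [← add_mul, hst, one_mul]
    linarith [mul_le_mul_of_nonneg_left hμs hs, mul_le_mul_of_nonneg_left hρs ht]

lemma isCompact_denseMeasures : IsCompact (denseMeasures n κ) := by
  have : denseMeasures n κ =
      Set.univ.pi (fun _ => Set.Icc (0 : ℝ) 1) ∩ {ρ | κ * n ≤ ∑ i, ρ i} := by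
    ext ρ
    simp only [denseMeasures, IsBddMeasure, Set.mem_inter_iff, Set.mem_univ_pi, Set.mem_ofPred_eq]
  rw [this]
  exact (isCompact_univ_pi fun _ => isCompact_Icc).inter_right
    (isClosed_le continuous_const (by fun_prop))

lemma continuous_KLdiv_left (hb : ∀ i, b i ≠ 0) : Continuous (KLdiv · b) := by
  have h : (KLdiv · b) = fun ρ => ∑ i, (ρ i * log (ρ i) - ρ i * log (b i) + b i - ρ i) := by
    ext ρ
    refine sum_congr rfl fun i _ => ?_
    rcases eq_or_ne (ρ i) 0 with h0 | h0
    · simp [h0]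
    · rw [log_div h0 (hb i)]
      ring
  rw [h]
  have := continuous_mul_log
  fun_prop

lemma exists_isBregmanProj (hκ : κ ≤ 1) (hb : ∀ i, b i ≠ 0) : ∃ μ, IsBregmanProj κ b μ := by
  have hne : (denseMeasures n κ).Nonempty :=
    ⟨1, fun _ => ⟨zero_le_one, le_rfl⟩, by simpa using mul_le_of_le_one_left n.cast_nonneg hκ⟩
  obtain ⟨μ, hμ, hmin⟩ :=
    isCompact_denseMeasures.exists_isMinOn hne (continuous_KLdiv_left hb).continuousOn
  exact ⟨μ, isBregmanProj_iff.mpr ⟨hμ, hmin⟩⟩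

lemma KLdiv_three_point (hρ : ∀ i, 0 ≤ ρ i) (hμ : ∀ i, 0 < μ i) (hb : ∀ i, 0 < b i) :
    KLdiv ρ b = KLdiv μ b + ∑ i, (ρ i - μ i) * log (μ i / b i) + KLdiv ρ μ := by
  simp only [KLdiv_eq_sum_klTerm, ← sum_add_distrib]
  exact sum_congr rfl fun i _ => klTerm_three_point (hρ i) (hb i) (hμ i)

lemma KLdiv_le_sum_sq_div (hρ : ∀ i, 0 ≤ ρ i) (hμ : ∀ i, 0 < μ i) :
    KLdiv ρ μ ≤ ∑ i, (ρ i - μ i) ^ 2 / μ i :=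
  sum_le_sum fun i _ => klTerm_le_sq_div (hρ i) (hμ i)

lemma KLdiv_exp_mul (hρ : ∀ i, 0 ≤ ρ i) (hb : ∀ i, 0 < b i) (c : Fin n → ℝ) :
    KLdiv ρ (fun i => exp (-c i) * b i) =
      KLdiv ρ b + ∑ i, ρ i * c i + ∑ i, (exp (-c i) * b i - b i) := by
  simp only [KLdiv_eq_sum_klTerm, ← sum_add_distrib]
  exact sum_congr rfl fun i _ => klTerm_exp_mul (hρ i) (hb i) (c i)

lemma KLdiv_nonneg (hρ : ∀ i, 0 ≤ ρ i) (hb : ∀ i, 0 < b i) : 0 ≤ KLdiv ρ b :=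
  sum_nonneg fun i _ => klTerm_nonneg (hρ i) (hb i)

lemma KLdiv_add_KLdiv_swap (μ ν : Fin n → ℝ) :
    KLdiv μ ν + KLdiv ν μ = ∑ i, (μ i - ν i) * log (μ i / ν i) := by
  simp only [KLdiv_eq_sum_klTerm, ← sum_add_distrib, klTerm_add_klTerm]

lemma KLdiv_const_le {ν : Fin n → ℝ} {c : ℝ} (hκ : 0 < κ) (hν : ∀ i, ν i ∈ Set.Icc 0 c) :
    KLdiv ν (fun _ => κ) ≤ (∑ i, ν i) * log (c / κ) + κ * n - ∑ i, ν i := by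
  have hlog : ∀ i, ν i * log (ν i / κ) ≤ ν i * log (c / κ) := by
    intro i
    rcases (hν i).1.eq_or_lt with h | h
    · simp [← h]
    · exact mul_le_mul_of_nonneg_left
        (log_le_log (div_pos h hκ) (div_le_div_of_nonneg_right (hν i).2 hκ.le)) h.le
  calc KLdiv ν (fun _ => κ) = ∑ i, ν i * log (ν i / κ) + κ * n - ∑ i, ν i := by
        simp [KLdiv, sum_add_distrib, sum_sub_distrib, mul_comm]
    _ ≤ _ := by
        rw [sum_mul]
        linarith [sum_le_sum fun i (_ : i ∈ univ) => hlog i]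

lemma exists_mem_denseMeasures_KLdiv_lt (hκ : 0 < κ) {F : Finset (Fin n)} (hF : κ * n < #F) :
    ∃ ν ∈ denseMeasures n κ, ∑ i, ν i = κ * n ∧ (∀ i ∉ F, ν i = 0) ∧
      KLdiv ν (fun _ => κ) < κ * n * log (1 / κ) := by
  have hn : (0 : ℝ) < n := by
    rcases n.eq_zero_or_pos with rfl | hn
    · simp [Finset.card_eq_zero.mpr (Subsingleton.elim F ∅)] at hF
    · exact_mod_cast hn
  have hF₀ : (0 : ℝ) < #F := by linarith [mul_pos hκ hn]
  set c := κ * n / #F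
  have hc₀ : 0 < c := by positivity
  have hc₁ : c < 1 := (div_lt_one hF₀).mpr hF
  set ν : Fin n → ℝ := fun i => if i ∈ F then c else 0
  have hν : ∀ i, ν i ∈ Set.Icc 0 c := fun i => by
    by_cases hi : i ∈ F <;> simp [ν, hi, hc₀.le]
  have hνs : ∑ i, ν i = κ * n := by
    simp only [ν, sum_ite_mem, univ_inter, sum_const, nsmul_eq_mul]
    exact mul_div_cancel₀ _ hF₀.ne'
  refine ⟨ν, ⟨fun i => ⟨(hν i).1, (hν i).2.trans hc₁.le⟩, hνs.ge⟩, hνs,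
    fun i hi => if_neg hi, ?_⟩
  calc KLdiv ν (fun _ => κ) ≤ κ * n * log (c / κ) := by
        simpa [hνs] using KLdiv_const_le hκ hν
    _ < κ * n * log (1 / κ) := by gcongr

namespace IsBregmanProj

lemma le_apply (hp : IsBregmanProj κ b μ) (hb : ∀ i, 0 < b i) (hb₁ : ∀ i, b i ≤ 1) (i : Fin n) :
    b i ≤ μ i := by
  by_contra! hi
  set ρ : Fin n → ℝ := fun j => max (μ j) (b j)
  have hρ : IsBddMeasure ρ := fun j => ⟨(hp.1.1 j).1.trans (le_max_left _ _),
    max_le (hp.1.1 j).2 (hb₁ j)⟩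
  have hρs : κ * n ≤ ∑ j, ρ j := hp.1.2.trans (sum_le_sum fun j _ => le_max_left _ _)
  have hterm : ∀ j, μ j < b j → klTerm (ρ j) (b j) < klTerm (μ j) (b j) := fun j hj => by
    rw [show ρ j = b j from max_eq_right hj.le, klTerm_self (hb j).ne']
    exact klTerm_pos (hp.1.1 j).1 (hb j) hj.ne
  refine (hp.2 ρ hρ hρs).not_gt (sum_lt_sum (fun j _ => ?_) ⟨i, mem_univ i, hterm i hi⟩)
  rcases le_or_gt (b j) (μ j) with hj | hj
  · simp [ρ, max_eq_left hj]
  · exact (hterm j hj).le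

lemma sum_eq (hp : IsBregmanProj κ b μ) (hb : ∀ i, 0 < b i) (hbs : ∑ i, b i ≤ κ * n) :
    ∑ i, μ i = κ * n := by
  refine le_antisymm (not_lt.mp fun hμs => ?_) hp.1.2
  obtain ⟨i, -, hi⟩ : ∃ i ∈ univ, b i < μ i := by
    by_contra! h
    exact (hbs.trans_lt hμs).not_ge (sum_le_sum h)
  -- lower the coordinate `i` towards `b i`, spending only the excess mass
  set v := max (b i) (μ i - (∑ j, μ j - κ * n))
  have hv : v < μ i := max_lt hi (by linarith)
  set ρ := Function.update μ i v
  have hρ : IsBddMeasure ρ := by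
    intro j
    rcases eq_or_ne j i with rfl | hj
    · simp only [ρ, Function.update_self]
      exact ⟨(hb j).le.trans (le_max_left _ _), hv.le.trans (hp.1.1 j).2⟩
    · simpa only [ρ, Function.update_of_ne hj] using hp.1.1 j
  have hρs : κ * n ≤ ∑ j, ρ j := by
    rw [sum_update_of_mem (mem_univ i)]
    linarith [sum_eq_add_sum_sdiff_singleton_of_mem (mem_univ i) μ,
      le_max_right (b i) (μ i - (∑ j, μ j - κ * n))]
  have hlt : KLdiv ρ b < KLdiv μ b := by
    rw [KLdiv_eq_sum_klTerm, KLdiv_eq_sum_klTerm]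
    refine sum_lt_sum (fun j _ => ?_) ⟨i, mem_univ i, ?_⟩
    · rcases eq_or_ne j i with rfl | hj
      · simpa only [ρ, Function.update_self] using
          (klTerm_lt_klTerm (hb j) (le_max_left _ _) hv).le
      · simp only [ρ, Function.update_of_ne hj, le_refl]
    · simpa only [ρ, Function.update_self] using klTerm_lt_klTerm (hb i) (le_max_left _ _) hv
  exact (hp.2 ρ hρ hρs).not_gt hlt

lemma KLdiv_add_KLdiv_le (hp : IsBregmanProj κ b μ) (hb : ∀ i, 0 < b i) (hμ : ∀ i, 0 < μ i)
    (hρ : ρ ∈ denseMeasures n κ) : KLdiv μ b + KLdiv ρ μ ≤ KLdiv ρ b := by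
  set E := ∑ i, (ρ i - μ i) * log (μ i / b i)
  set C := ∑ i, (ρ i - μ i) ^ 2 / μ i
  rw [KLdiv_three_point (fun i => (hρ.1 i).1) hμ hb]
  suffices 0 ≤ E by linarith
  -- first-order optimality of `μ` along the segment from `μ` towards `ρ`
  refine nonneg_of_forall_add_mul_nonneg (C := C) fun s hs => ?_
  set σ := (1 - s) • μ + s • ρ
  have hσ : σ ∈ denseMeasures n κ :=
    convex_denseMeasures hp.1 hρ (by linarith [hs.2]) hs.1.le (by ring)
  have hσ₀ : ∀ i, 0 ≤ σ i := fun i => (hσ.1 i).1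
  have hσμ : ∀ i, σ i - μ i = s * (ρ i - μ i) := fun i => by
    simp only [σ, Pi.add_apply, Pi.smul_apply, smul_eq_mul]
    ring
  have hlin : ∑ i, (σ i - μ i) * log (μ i / b i) = s * E := by
    simp only [hσμ, mul_assoc, ← mul_sum, E]
  have hquad : ∑ i, (σ i - μ i) ^ 2 / μ i = s ^ 2 * C := by
    simp only [hσμ, mul_pow, mul_div_assoc, ← mul_sum, C]
  have hmin := hp.2 σ hσ.1 hσ.2
  rw [KLdiv_three_point hσ₀ hμ hb, hlin] at hmin
  have hσ_le := KLdiv_le_sum_sq_div hσ₀ hμ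
  rw [hquad] at hσ_le
  nlinarith [hs.1]

lemma sum_sub_mul_le {μ' ℓ : Fin n → ℝ} {η : ℝ} (hp : IsBregmanProj κ b μ)
    (hp' : IsBregmanProj κ (fun i => exp (-(η * ℓ i)) * b i) μ') (hη : 0 ≤ η)
    (hℓ : ∀ i, |ℓ i| ≤ 1) (hb : ∀ i, 0 < b i) (hμ : ∀ i, 0 < μ i) (hμ' : ∀ i, 0 < μ' i) :
    ∑ i, (μ i - μ' i) * ℓ i ≤ η * ((∑ i, μ i + ∑ i, μ' i) / 2) := by
  refine sum_sub_mul_le_of_sum_sub_mul_log_le hη hμ hμ' hℓ ?_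
  rw [← KLdiv_add_KLdiv_swap]
  have h := hp.KLdiv_add_KLdiv_le hb hμ hp'.1
  have h' := hp'.KLdiv_add_KLdiv_le (fun i => mul_pos (exp_pos _) (hb i)) hμ' hp.1
  rw [KLdiv_exp_mul (fun i => (hp.1.1 i).1) hb, KLdiv_exp_mul (fun i => (hp'.1.1 i).1) hb] at h'
  have hloss : η * ∑ i, (μ i - μ' i) * ℓ i = ∑ i, μ i * (η * ℓ i) - ∑ i, μ' i * (η * ℓ i) := by
    rw [mul_sum, ← sum_sub_distrib]
    exact sum_congr rfl fun i _ => by ring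
  linarith

end IsBregmanProj

end BregmanProjection

section BeTheLeader

variable {α : Type*} {Γ : Set α} {F L : ℕ → α → ℝ} {c : ℕ → ℝ}

lemma apply_succ_eq_add_sum (hF : ∀ t, 1 ≤ t → ∀ ρ ∈ Γ, F (t + 1) ρ = F t ρ + L t ρ + c t)
    {ρ : α} (hρ : ρ ∈ Γ) (T : ℕ) : F (T + 1) ρ = F 1 ρ + ∑ t ∈ Icc 1 T, (L t ρ + c t) := by
  induction T with
  | zero => simp
  | succ T ih =>
    rw [hF (T + 1) (by omega) ρ hρ, ih, sum_Icc_succ_top (by omega)]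
    ring

lemma add_sum_le_of_isMinOn (hF : ∀ t, 1 ≤ t → ∀ ρ ∈ Γ, F (t + 1) ρ = F t ρ + L t ρ + c t)
    {p : ℕ → α} {T : ℕ} (hp : ∀ t, 1 ≤ t → t ≤ T + 1 → p t ∈ Γ ∧ IsMinOn (F t) Γ (p t))
    {ν : α} (hν : ν ∈ Γ) :
    F 1 (p 1) + ∑ t ∈ Icc 1 T, (L t (p (t + 1)) + c t) ≤ F (T + 1) ν := by
  induction T generalizing ν with
  | zero => simpa using (hp 1 le_rfl le_rfl).2 hν
  | succ T ih =>
    obtain ⟨hmem, hmin⟩ := hp (T + 2) (by omega) le_rfl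
    have hprev := ih (fun t h₁ h₂ => hp t h₁ (by omega)) hmem
    rw [sum_Icc_succ_top (by omega)]
    calc _ ≤ F (T + 1) (p (T + 2)) + (L (T + 1) (p (T + 2)) + c (T + 1)) := by linarith
      _ = F (T + 2) (p (T + 2)) := by rw [hF (T + 1) (by omega) _ hmem]; ring
      _ ≤ F (T + 2) ν := hmin hν

/-- Be-the-leader: charging each round's loss to the *next* leader beats every fixed `ν ∈ Γ`. -/
lemma be_the_leader (hF : ∀ t, 1 ≤ t → ∀ ρ ∈ Γ, F (t + 1) ρ = F t ρ + L t ρ + c t)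
    {p : ℕ → α} {T : ℕ} (hp : ∀ t, 1 ≤ t → t ≤ T + 1 → p t ∈ Γ ∧ IsMinOn (F t) Γ (p t))
    {ν : α} (hν : ν ∈ Γ) :
    ∑ t ∈ Icc 1 T, L t (p (t + 1)) ≤ F 1 ν - F 1 (p 1) + ∑ t ∈ Icc 1 T, L t ν := by
  have h := add_sum_le_of_isMinOn hF hp hν
  rw [apply_succ_eq_add_sum hF hν, sum_add_distrib, sum_add_distrib] at h
  linarith

end BeTheLeader

section LazyWeights

variable {n : ℕ} {κ η : ℝ} {ℓ : ℕ → Fin n → ℝ}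

noncomputable def lazyWeights (κ η : ℝ) (ℓ : ℕ → Fin n → ℝ) (t : ℕ) (i : Fin n) : ℝ :=
  exp (-η * ∑ j ∈ Ico 1 t, ℓ j i) * κ

lemma lazyWeights_one : lazyWeights κ η ℓ 1 = fun _ => κ := by
  ext i
  simp [lazyWeights]

lemma lazyWeights_succ {t : ℕ} (ht : 1 ≤ t) :
    lazyWeights κ η ℓ (t + 1) = fun i => exp (-(η * ℓ t i)) * lazyWeights κ η ℓ t i := by
  ext i
  rw [lazyWeights, lazyWeights, sum_Ico_succ_top ht, ← mul_assoc, ← exp_add]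
  ring_nf

lemma lazyWeights_pos (hκ : 0 < κ) (t : ℕ) (i : Fin n) : 0 < lazyWeights κ η ℓ t i :=
  mul_pos (exp_pos _) hκ

lemma lazyWeights_le (hκ : 0 < κ) (hη : 0 ≤ η) (hℓ : ∀ t i, 0 ≤ ℓ t i) (t : ℕ) (i : Fin n) :
    lazyWeights κ η ℓ t i ≤ κ := by
  refine mul_le_of_le_one_left hκ.le (exp_le_one_iff.mpr ?_)
  have := sum_nonneg fun j (_ : j ∈ Ico 1 t) => hℓ j i
  nlinarith

lemma KLdiv_lazyWeights_succ (hκ : 0 < κ) {t : ℕ} (ht : 1 ≤ t) {ρ : Fin n → ℝ}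
    (hρ : ∀ i, 0 ≤ ρ i) :
    KLdiv ρ (lazyWeights κ η ℓ (t + 1)) = KLdiv ρ (lazyWeights κ η ℓ t) +
      η * ∑ i, ρ i * ℓ t i + ∑ i, (lazyWeights κ η ℓ (t + 1) i - lazyWeights κ η ℓ t i) := by
  rw [lazyWeights_succ ht, KLdiv_exp_mul hρ (lazyWeights_pos hκ t), mul_sum]
  simp only [mul_left_comm η]

end LazyWeights

namespace IsBregmanProj

variable {n : ℕ} {κ η : ℝ} {ℓ : ℕ → Fin n → ℝ} {t : ℕ} {μ μ' : Fin n → ℝ}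

lemma div_sum_le {b : Fin n → ℝ} (hp : IsBregmanProj κ b μ) (hκ : 0 < κ) (i : Fin n) :
    μ i / ∑ k, μ k ≤ 1 / (κ * n) :=
  div_le_div₀ zero_le_one (hp.1.1 i).2 (mul_pos hκ (by exact_mod_cast i.pos)) hp.1.2

lemma pos_of_lazyWeights (hp : IsBregmanProj κ (lazyWeights κ η ℓ t) μ) (hκ : κ ∈ Set.Ioc 0 1)
    (hη : 0 ≤ η) (hℓ : ∀ t i, 0 ≤ ℓ t i) (i : Fin n) : 0 < μ i :=
  (lazyWeights_pos hκ.1 t i).trans_le <|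
    hp.le_apply (lazyWeights_pos hκ.1 t) (fun i => (lazyWeights_le hκ.1 hη hℓ t i).trans hκ.2) i

lemma sum_eq_of_lazyWeights (hp : IsBregmanProj κ (lazyWeights κ η ℓ t) μ) (hκ : 0 < κ)
    (hη : 0 ≤ η) (hℓ : ∀ t i, 0 ≤ ℓ t i) : ∑ i, μ i = κ * n :=
  hp.sum_eq (lazyWeights_pos hκ t)
    ((sum_le_sum fun i _ => lazyWeights_le hκ hη hℓ t i).trans_eq (by simp [mul_comm]))

lemma sum_mul_le_of_lazyWeights (hp : IsBregmanProj κ (lazyWeights κ η ℓ t) μ)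
    (hp' : IsBregmanProj κ (lazyWeights κ η ℓ (t + 1)) μ') (ht : 1 ≤ t) (hκ : κ ∈ Set.Ioc 0 1)
    (hη : 0 ≤ η) (hℓ : ∀ t i, ℓ t i ∈ Set.Icc 0 1) :
    ∑ i, μ i * ℓ t i ≤ ∑ i, μ' i * ℓ t i + η * (κ * n) := by
  have hℓ₀ : ∀ t i, 0 ≤ ℓ t i := fun t i => (hℓ t i).1
  have hμ' := hp'.pos_of_lazyWeights hκ hη hℓ₀
  have hsum' := hp'.sum_eq_of_lazyWeights hκ.1 hη hℓ₀
  rw [lazyWeights_succ ht] at hp'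
  have h := hp.sum_sub_mul_le hp' hη (fun i => abs_le.mpr ⟨by linarith [hℓ₀ t i], (hℓ t i).2⟩)
    (lazyWeights_pos hκ.1 t) (hp.pos_of_lazyWeights hκ hη hℓ₀) hμ'
  rw [hp.sum_eq_of_lazyWeights hκ.1 hη hℓ₀, hsum', add_self_div_two] at h
  simp only [sub_mul, sum_sub_distrib] at h
  linarith

end IsBregmanProj

lemma one_sub_half_abs_sub_eq {a y : ℝ} (hy : y = 1 ∨ y = -1) (ha : |a| ≤ 1) :
    1 - 1 / 2 * |a - y| = (1 + y * a) / 2 := by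
  rw [abs_le] at ha
  rcases hy with rfl | rfl
  · rw [abs_of_nonpos (by linarith)]
    ring
  · rw [abs_of_nonneg (by linarith)]
    ring

lemma one_sub_half_abs_sub_mem_Icc {a y : ℝ} (hy : y = 1 ∨ y = -1) (ha : |a| ≤ 1) :
    1 - 1 / 2 * |a - y| ∈ Set.Icc 0 1 := by
  rw [one_sub_half_abs_sub_eq hy ha]
  rw [abs_le] at ha
  rcases hy with rfl | rfl <;> constructor <;> linarith

lemma sum_one_sub_half_abs_sub_le {a : ℕ → ℝ} {y γ : ℝ} {T : ℕ} (hy : y = 1 ∨ y = -1)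
    (ha : ∀ t, |a t| ≤ 1) (hmargin : y * ((1 / (T : ℝ)) * ∑ t ∈ Icc 1 T, a t) ≤ γ) :
    ∑ t ∈ Icc 1 T, (1 - 1 / 2 * |a t - y|) ≤ T * (1 + γ) / 2 := by
  rcases T.eq_zero_or_pos with rfl | hT
  · simp
  have hT' : (0 : ℝ) < T := by exact_mod_cast hT
  rw [sum_congr rfl fun t _ => one_sub_half_abs_sub_eq hy (ha t), ← sum_div, sum_add_distrib,
    ← mul_sum, sum_const, Nat.card_Icc, nsmul_eq_mul, Nat.add_sub_cancel, mul_one]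
  rw [← mul_assoc, mul_comm y, mul_assoc, one_div, inv_mul_le_iff₀ hT'] at hmargin
  linarith

lemma mul_sum_le_sum_mul_one_sub_half {ι : Type*} [Fintype ι] {μ d : ι → ℝ} {γ : ℝ}
    (hμ : ∀ i, 0 ≤ μ i) (h : 1 / 2 * ∑ i, (μ i / ∑ k, μ k) * d i ≤ 1 / 2 - γ) :
    (1 / 2 + γ) * ∑ i, μ i ≤ ∑ i, μ i * (1 - 1 / 2 * d i) := by
  have hexpand : ∑ i, μ i * (1 - 1 / 2 * d i) = ∑ i, μ i - 1 / 2 * ∑ i, μ i * d i := by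
    rw [mul_sum, ← sum_sub_distrib]
    exact sum_congr rfl fun i _ => by ring
  rw [hexpand]
  rcases (sum_nonneg fun i (_ : i ∈ univ) => hμ i).eq_or_lt with hM | hM
  · have hzero := (sum_eq_zero_iff_of_nonneg fun i _ => hμ i).mp hM.symm
    simp [hzero]
  · have hnorm : ∑ i, (μ i / ∑ k, μ k) * d i = (∑ i, μ i * d i) / ∑ k, μ k := by
      rw [sum_div]
      exact sum_congr rfl fun i _ => by ring
    have hloss : (∑ i, μ i * d i) / ∑ k, μ k ≤ 1 - 2 * γ := by linarith
    rw [div_le_iff₀ hM] at hloss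
    linarith

section Boosting

variable {n : ℕ} {κ : ℝ}

theorem lazyWeights_regret {η : ℝ} (hκ : κ ∈ Set.Ioc 0 1) (hη : 0 ≤ η)
    {ℓ : ℕ → Fin n → ℝ} (hℓ : ∀ t i, ℓ t i ∈ Set.Icc 0 1) {T : ℕ} {μ : ℕ → Fin n → ℝ}
    (hμ : ∀ t, 1 ≤ t → t ≤ T → IsBregmanProj κ (lazyWeights κ η ℓ t) (μ t))
    {ν : Fin n → ℝ} (hν : ν ∈ denseMeasures n κ) :
    η * ∑ t ∈ Icc 1 T, ∑ i, μ t i * ℓ t i ≤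
      KLdiv ν (fun _ => κ) + η * ∑ t ∈ Icc 1 T, ∑ i, ν i * ℓ t i + η ^ 2 * T * (κ * n) := by
  set w := lazyWeights κ η ℓ
  -- the analysis also needs the projection of round `T + 1`, which the booster never uses
  obtain ⟨μlast, hlast⟩ :=
    exists_isBregmanProj hκ.2 fun i => (lazyWeights_pos (η := η) (ℓ := ℓ) hκ.1 (T + 1) i).ne'
  set p := Function.update μ (T + 1) μlast
  have hpμ : ∀ t ≤ T, p t = μ t := fun t ht => Function.update_of_ne (by omega) _ _
  have hp : ∀ t, 1 ≤ t → t ≤ T + 1 → IsBregmanProj κ (w t) (p t) := by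
    intro t h₁ h₂
    rcases Nat.lt_or_eq_of_le h₂ with h₂ | rfl
    · rw [hpμ t (by omega)]
      exact hμ t h₁ (by omega)
    · simpa [p] using hlast
  have hleader := be_the_leader (Γ := denseMeasures n κ) (F := fun t ρ => KLdiv ρ (w t))
    (L := fun t ρ => η * ∑ i, ρ i * ℓ t i) (c := fun t => ∑ i, (w (t + 1) i - w t i))
    (fun t ht ρ hρ => KLdiv_lazyWeights_succ hκ.1 ht fun i => (hρ.1 i).1)
    (fun t h₁ h₂ => isBregmanProj_iff.mp (hp t h₁ h₂)) hν
  have hfirst : 0 ≤ KLdiv (p 1) (w 1) :=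
    KLdiv_nonneg (fun i => ((hp 1 le_rfl (by omega)).1.1 i).1) (lazyWeights_pos hκ.1 1)
  simp only [w, lazyWeights_one] at hleader hfirst
  calc η * ∑ t ∈ Icc 1 T, ∑ i, μ t i * ℓ t i
      ≤ η * ∑ t ∈ Icc 1 T, (∑ i, p (t + 1) i * ℓ t i + η * (κ * n)) := by
        gcongr with t ht
        obtain ⟨h₁, h₂⟩ := mem_Icc.mp ht
        rw [← hpμ t h₂]
        exact (hp t h₁ (by omega)).sum_mul_le_of_lazyWeights (hp (t + 1) (by omega) (by omega))
          h₁ hκ hη hℓ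
    _ = ∑ t ∈ Icc 1 T, η * ∑ i, p (t + 1) i * ℓ t i + η ^ 2 * T * (κ * n) := by
        rw [sum_add_distrib, mul_add, mul_sum, sum_const, Nat.card_Icc, nsmul_eq_mul]
        push_cast
        ring
    _ ≤ _ := by
        rw [mul_sum]
        linarith

theorem card_le_of_lazyWeights {γ : ℝ} (hκ : κ ∈ Set.Ioc 0 1) (hγ : 0 < γ)
    {ℓ : ℕ → Fin n → ℝ} (hℓ : ∀ t i, ℓ t i ∈ Set.Icc 0 1) {T : ℕ}
    (hT : 16 * log (1 / κ) / γ ^ 2 ≤ T) {μ : ℕ → Fin n → ℝ}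
    (hμ : ∀ t, 1 ≤ t → t ≤ T → IsBregmanProj κ (lazyWeights κ (γ / 4) ℓ t) (μ t))
    (hadv : ∀ t, 1 ≤ t → t ≤ T → (1 / 2 + γ) * ∑ i, μ t i ≤ ∑ i, μ t i * ℓ t i)
    {F : Finset (Fin n)} (hF : ∀ i ∈ F, ∑ t ∈ Icc 1 T, ℓ t i ≤ T * (1 + γ) / 2) :
    (#F : ℝ) ≤ κ * n := by
  by_contra! hcard
  obtain ⟨ν, hν, hνs, hνF, hνKL⟩ := exists_mem_denseMeasures_KLdiv_lt hκ.1 hcard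
  have hregret := lazyWeights_regret hκ (by positivity) hℓ hμ hν
  have hgain : T * ((1 / 2 + γ) * (κ * n)) ≤ ∑ t ∈ Icc 1 T, ∑ i, μ t i * ℓ t i := by
    calc (T : ℝ) * ((1 / 2 + γ) * (κ * n)) = ∑ t ∈ Icc 1 T, (1 / 2 + γ) * (κ * n) := by simp
      _ ≤ _ := sum_le_sum fun t ht => by
        obtain ⟨h₁, h₂⟩ := mem_Icc.mp ht
        simpa [(hμ t h₁ h₂).sum_eq_of_lazyWeights hκ.1 (by positivity) fun t i => (hℓ t i).1]
          using hadv t h₁ h₂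
  have hcomp : ∑ t ∈ Icc 1 T, ∑ i, ν i * ℓ t i ≤ κ * n * (T * (1 + γ) / 2) := by
    rw [sum_comm, ← hνs, sum_mul]
    refine sum_le_sum fun i _ => ?_
    rw [← mul_sum]
    by_cases hi : i ∈ F
    · exact mul_le_mul_of_nonneg_left (hF i hi) (hν.1 i).1
    · simp [hνF i hi]
  have hlog : log (1 / κ) ≤ γ ^ 2 * T / 16 := by
    rw [div_le_iff₀ (by positivity)] at hT
    linarith
  have hKL : KLdiv ν (fun _ => κ) < κ * n * (γ ^ 2 * T / 16) :=
    hνKL.trans_le (mul_le_mul_of_nonneg_left hlog (mul_nonneg hκ.1.le n.cast_nonneg))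
  -- for `η = γ / 4` the leaders' surplus `η (γ / 2 - η) T κ n` is exactly `γ² T κ n / 16`
  nlinarith [mul_le_mul_of_nonneg_left hgain (by positivity : (0 : ℝ) ≤ γ / 4),
    mul_le_mul_of_nonneg_left hcomp (by positivity : (0 : ℝ) ≤ γ / 4)]

end Boosting

theorem lazy_bregman_round_bound_general {X : Type*} {n : ℕ}
    (x : Fin n → X) (y : Fin n → ℝ) (hy : ∀ i, y i = 1 ∨ y i = -1)
    (κ γ : ℝ) (hκ : κ ∈ Set.Ioo (0:ℝ) 1) (hγ : γ ∈ Set.Ioo (0:ℝ) 1)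
    (T : ℕ) (hT : 16 * Real.log (1 / κ) / γ ^ 2 ≤ T)
    (h : ℕ → X → ℝ) (hbd : ∀ t z, |h t z| ≤ 1)
    (μ : ℕ → Fin n → ℝ)
    (hproj : ∀ t, 1 ≤ t → t ≤ T →
      IsBregmanProj κ
        (fun i =>
          Real.exp (-(γ / 4) * ∑ j ∈ Finset.Ico 1 t, (1 - (1 / 2) * |h j (x i) - y i|))
            * κ)
        (μ t))
    (hadv : ∀ t, 1 ≤ t → t ≤ T →
      (1 / 2) * ∑ i, (μ t i / ∑ k, μ t k) * |h t (x i) - y i| ≤ 1 / 2 - γ) :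
    ((Set.ncard
        {i : Fin n | y i * ((1 / (T : ℝ)) * ∑ t ∈ Finset.Icc 1 T, h t (x i)) ≤ γ} : ℝ)
      ≤ κ * n) ∧
    (∀ t, 1 ≤ t → t ≤ T → ∀ i, μ t i / ∑ k, μ t k ≤ 1 / (κ * n)) := by
  refine ⟨?_, fun t h₁ h₂ i => (hproj t h₁ h₂).div_sum_le hκ.1 i⟩
  rw [← coe_filter_univ, Set.ncard_coe_finset]
  exact card_le_of_lazyWeights (ℓ := fun t i => 1 - 1 / 2 * |h t (x i) - y i|)
    ⟨hκ.1, hκ.2.le⟩ hγ.1 (fun t i => one_sub_half_abs_sub_mem_Icc (hy i) (hbd t (x i))) hT hproj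
    (fun t h₁ h₂ => mul_sum_le_sum_mul_one_sub_half (fun i => ((hproj t h₁ h₂).1.1 i).1)
      (hadv t h₁ h₂))
    (fun i hi => sum_one_sub_half_abs_sub_le (hy i) (fun t => hbd t (x i)) (mem_filter.mp hi).2)

/-- **Round bound for boosting via lazy Bregman projection.**  Running the lazy
dense multiplicative-weights booster with learning rate `λ = γ/4` against a weak
learner with advantage `γ` for `T ≥ 16 log(1/κ)/γ²` rounds yields an aggregate
`H = (1/T)Σ_t h_t` with margin `> γ` on all but `κn` examples, while every
distribution supplied to the weak learner is `1/(κn)`-smooth. -/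
theorem lazy_bregman_round_bound {X : Type*} {n : ℕ} (hn : 0 < n)
    (x : Fin n → X) (y : Fin n → ℝ) (hy : ∀ i, y i = 1 ∨ y i = -1)
    (κ γ : ℝ) (hκ : κ ∈ Set.Ioo (0:ℝ) 1) (hγ : γ ∈ Set.Ioo (0:ℝ) 1)
    (T : ℕ) (hT : 16 * Real.log (1 / κ) / γ ^ 2 ≤ T)
    (h : ℕ → X → ℝ) (hbd : ∀ t z, |h t z| ≤ 1)
    (μ : ℕ → Fin n → ℝ)
    (hproj : ∀ t, 1 ≤ t → t ≤ T →
      IsBregmanProj κ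
        (fun i =>
          Real.exp (-(γ / 4) * ∑ j ∈ Finset.Ico 1 t, (1 - (1 / 2) * |h j (x i) - y i|))
            * κ)
        (μ t))
    (hadv : ∀ t, 1 ≤ t → t ≤ T →
      (1 / 2) * ∑ i, (μ t i / ∑ k, μ t k) * |h t (x i) - y i| ≤ 1 / 2 - γ) :
    ((Set.ncard
        {i : Fin n | y i * ((1 / (T : ℝ)) * ∑ t ∈ Finset.Icc 1 T, h t (x i)) ≤ γ} : ℝ)
      ≤ κ * n) ∧
    (∀ t, 1 ≤ t → t ≤ T → ∀ i, μ t i / ∑ k, μ t k ≤ 1 / (κ * n)) :=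
  lazy_bregman_round_bound_general x y hy κ γ hκ hγ T hT h hbd μ hproj hadv
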